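/- arXiv:2302.08139 — 2 statements merged into one kernel-verified Lean document; each statement's English description precedes it below -/
import Mathlib

section
/- Suppose the time-t joint distributions satisfy D_TV(P_1^t ‖ P_2^t) ≤ t·(ε_π + ε_ψ + ε_m) + ε_π + ε_ψ for all t ≥ 0, and rewards are bounded by r_max. Then the discounted return gap satisfies |η_1 − η_2| ≤ (2 r_max / (1−γ)) · ( γ(ε_π + ε_ψ + ε_m)/(1−γ) + ε_π + ε_ψ ). -/
open Finset

/-- Lemma C.3: rollout return bound. -/
theorem rollout_return_bound {W : Type*} [Fintype W]
    (γ : ℝ) (hγ0 : 0 ≤ γ) (hγ1 : γ < 1)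
    (R : W → ℝ) (rmax : ℝ) (hR : ∀ w, |R w| ≤ rmax)
    (επ εψ εm : ℝ) (hεπ : 0 ≤ επ) (hεψ : 0 ≤ εψ) (hεm : 0 ≤ εm)
    (P1 P2 : ℕ → W → ℝ)
    (hP1 : ∀ t w, 0 ≤ P1 t w) (hP2 : ∀ t w, 0 ≤ P2 t w)
    (hP1s : ∀ t, ∑ w, P1 t w = 1) (hP2s : ∀ t, ∑ w, P2 t w = 1)
    (hTV : ∀ t : ℕ, (1/2) * ∑ w, |P1 t w - P2 t w| ≤
      (t : ℝ) * (επ + εψ + εm) + επ + εψ)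
    (η1 η2 : ℝ)
    (hη1 : η1 = ∑ w, R w * ∑' t : ℕ, γ ^ t * P1 t w)
    (hη2 : η2 = ∑ w, R w * ∑' t : ℕ, γ ^ t * P2 t w) :
    |η1 - η2| ≤
      (2 * rmax / (1 - γ)) * (γ * (επ + εψ + εm) / (1 - γ) + επ + εψ) := by
  cases isEmpty_or_nonempty W with
  | inl h => simpa using hP1s 0
  | inr h =>
  obtain ⟨w0⟩ := h
  have hrmax : 0 ≤ rmax := le_trans (abs_nonneg _) (hR w0)
  have hγlt : 0 < 1 - γ := by linarith
  have hgeo : Summable (fun t : ℕ => γ ^ t) := summable_geometric_of_lt_one hγ0 hγ1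
  have hPle1 : ∀ t w, P1 t w ≤ 1 := fun t w => by
    rw [← hP1s t]; exact Finset.single_le_sum (fun i _ => hP1 t i) (Finset.mem_univ w)
  have hPle2 : ∀ t w, P2 t w ≤ 1 := fun t w => by
    rw [← hP2s t]; exact Finset.single_le_sum (fun i _ => hP2 t i) (Finset.mem_univ w)
  have hsum1 : ∀ w, Summable (fun t : ℕ => γ ^ t * P1 t w) := fun w => by
    apply Summable.of_nonneg_of_le (fun t => mul_nonneg (pow_nonneg hγ0 t) (hP1 t w)) (fun t => ?_) hgeo
    calc γ ^ t * P1 t w ≤ γ ^ t * 1 := by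
          exact mul_le_mul_of_nonneg_left (hPle1 t w) (pow_nonneg hγ0 t)
      _ = γ ^ t := mul_one _
  have hsum2 : ∀ w, Summable (fun t : ℕ => γ ^ t * P2 t w) := fun w => by
    apply Summable.of_nonneg_of_le (fun t => mul_nonneg (pow_nonneg hγ0 t) (hP2 t w)) (fun t => ?_) hgeo
    calc γ ^ t * P2 t w ≤ γ ^ t * 1 := by
          exact mul_le_mul_of_nonneg_left (hPle2 t w) (pow_nonneg hγ0 t)
      _ = γ ^ t := mul_one _
  have habsle : ∀ t w, |P1 t w - P2 t w| ≤ 2 := fun t w => by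
    have := hPle1 t w; have := hPle2 t w; have := hP1 t w; have := hP2 t w
    rw [abs_le]; constructor <;> linarith
  have hsumd : ∀ w, Summable (fun t : ℕ => γ ^ t * |P1 t w - P2 t w|) := fun w => by
    apply Summable.of_nonneg_of_le (fun t => by positivity) (fun t => ?_) (hgeo.mul_left 2)
    calc γ ^ t * |P1 t w - P2 t w| ≤ γ ^ t * 2 := by
          exact mul_le_mul_of_nonneg_left (habsle t w) (pow_nonneg hγ0 t)
      _ = 2 * γ ^ t := by ring
  -- the geometric-with-t sum
  have hnorm : ‖γ‖ < 1 := by rwa [Real.norm_eq_abs, abs_of_nonneg hγ0]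
  have htgeo : HasSum (fun t : ℕ => (t : ℝ) * γ ^ t) (γ / (1 - γ) ^ 2) :=
    hasSum_coe_mul_geometric_of_norm_lt_one hnorm
  -- bound series gₜ = γ^t * (2*(t*S + B))
  set S := επ + εψ + εm with hS
  set B := επ + εψ with hB
  have hg : Summable (fun t : ℕ => γ ^ t * (2 * ((t : ℝ) * S + B))) := by
    have : (fun t : ℕ => γ ^ t * (2 * ((t : ℝ) * S + B)))
        = fun t : ℕ => (2 * S) * ((t : ℝ) * γ ^ t) + (2 * B) * γ ^ t := by
      funext t; ring
    rw [this]
    exact ((htgeo.summable.mul_left _).add (hgeo.mul_left _))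
  have hgval : ∑' t : ℕ, γ ^ t * (2 * ((t : ℝ) * S + B))
      = 2 * S * (γ / (1 - γ) ^ 2) + 2 * B * (1 - γ)⁻¹ := by
    have h1 : HasSum (fun t : ℕ => (2 * S) * ((t : ℝ) * γ ^ t) + (2 * B) * γ ^ t)
        (2 * S * (γ / (1 - γ) ^ 2) + 2 * B * (1 - γ)⁻¹) := by
      have hgeoh : HasSum (fun t : ℕ => γ ^ t) (1 - γ)⁻¹ := by
        simpa using hasSum_geometric_of_lt_one hγ0 hγ1
      exact (htgeo.mul_left _).add (hgeoh.mul_left _)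
    have h2 : (fun t : ℕ => γ ^ t * (2 * ((t : ℝ) * S + B)))
        = fun t : ℕ => (2 * S) * ((t : ℝ) * γ ^ t) + (2 * B) * γ ^ t := by
      funext t; ring
    rw [h2]; exact h1.tsum_eq
  -- main chain
  have step1 : |η1 - η2| ≤ ∑ w, rmax * ∑' t : ℕ, γ ^ t * |P1 t w - P2 t w| := by
    rw [hη1, hη2, ← Finset.sum_sub_distrib]
    refine le_trans (Finset.abs_sum_le_sum_abs _ _) (Finset.sum_le_sum fun w _ => ?_)
    rw [← mul_sub]
    rw [abs_mul]
    have hts : ∑' t : ℕ, γ ^ t * P1 t w - ∑' t : ℕ, γ ^ t * P2 t w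
        = ∑' t : ℕ, (γ ^ t * P1 t w - γ ^ t * P2 t w) :=
      (Summable.tsum_sub (hsum1 w) (hsum2 w)).symm
    rw [hts]
    have habs : |∑' t : ℕ, (γ ^ t * P1 t w - γ ^ t * P2 t w)|
        ≤ ∑' t : ℕ, γ ^ t * |P1 t w - P2 t w| := by
      have := norm_tsum_le_tsum_norm (f := fun t : ℕ => γ ^ t * P1 t w - γ ^ t * P2 t w) ?_
      · simpa [Real.norm_eq_abs, ← mul_sub, abs_mul, abs_pow, abs_of_nonneg hγ0]
          using this
      · have : (fun t : ℕ => ‖γ ^ t * P1 t w - γ ^ t * P2 t w‖)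
            = fun t : ℕ => γ ^ t * |P1 t w - P2 t w| := by
          funext t
          rw [← mul_sub, Real.norm_eq_abs, abs_mul, abs_of_nonneg (pow_nonneg hγ0 t)]
        rw [this]; exact hsumd w
    have hnn : 0 ≤ ∑' t : ℕ, γ ^ t * |P1 t w - P2 t w| :=
      tsum_nonneg fun t => by positivity
    calc |R w| * |∑' t : ℕ, (γ ^ t * P1 t w - γ ^ t * P2 t w)|
        ≤ |R w| * ∑' t : ℕ, γ ^ t * |P1 t w - P2 t w| :=
          mul_le_mul_of_nonneg_left habs (abs_nonneg _)
      _ ≤ rmax * ∑' t : ℕ, γ ^ t * |P1 t w - P2 t w| :=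
          mul_le_mul_of_nonneg_right (hR w) hnn
  have step2 : ∑ w, rmax * ∑' t : ℕ, γ ^ t * |P1 t w - P2 t w|
      = rmax * ∑' t : ℕ, γ ^ t * ∑ w, |P1 t w - P2 t w| := by
    rw [← Finset.mul_sum]
    congr 1
    rw [← Summable.tsum_finsetSum (fun w _ => hsumd w)]
    congr 1; funext t; rw [Finset.mul_sum]
  have step3 : rmax * ∑' t : ℕ, γ ^ t * ∑ w, |P1 t w - P2 t w|
      ≤ rmax * ∑' t : ℕ, γ ^ t * (2 * ((t : ℝ) * S + B)) := by
    apply mul_le_mul_of_nonneg_left _ hrmax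
    apply Summable.tsum_le_tsum _ _ hg
    · intro t
      apply mul_le_mul_of_nonneg_left _ (pow_nonneg hγ0 t)
      have := hTV t
      rw [hS, hB]; linarith
    · apply Summable.of_nonneg_of_le (fun t => by positivity) (fun t => ?_) hg
      apply mul_le_mul_of_nonneg_left _ (pow_nonneg hγ0 t)
      have := hTV t
      rw [hS, hB]; linarith
  have final : rmax * ∑' t : ℕ, γ ^ t * (2 * ((t : ℝ) * S + B))
      = (2 * rmax / (1 - γ)) * (γ * S / (1 - γ) + B) := by
    rw [hgval]
    field_simp
  calc |η1 - η2| ≤ ∑ w, rmax * ∑' t : ℕ, γ ^ t * |P1 t w - P2 t w| := step1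
    _ = rmax * ∑' t : ℕ, γ ^ t * ∑ w, |P1 t w - P2 t w| := step2
    _ ≤ rmax * ∑' t : ℕ, γ ^ t * (2 * ((t : ℝ) * S + B)) := step3
    _ = (2 * rmax / (1 - γ)) * (γ * S / (1 - γ) + B) := final
    _ = (2 * rmax / (1 - γ)) * (γ * (επ + εψ + εm) / (1 - γ) + επ + εψ) := by
        rw [hS, hB]; ring
end

section
/- If δ_t ≤ t·c + d for 0 ≤ t ≤ h, δ_t ≤ h·c + (t−h)·c' + d' for h < t ≤ h+k, and δ_t ≤ (t−k)·c + d + k·c' + d' for t > h+k (with all constants nonnegative and δ_t ≥ 0), then ∑_{t=0}^∞ γ^t δ_t ≤ (h/(1−γ) + γ^{h+k+1}/(1−γ)^2)·c + d/(1−γ) + (γ^{h+1}/(1−γ))·(k·c' + d'), for any γ ∈ [0,1). -/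
/-!
Bound `δ t` by the majorant `h c + d + [h < t] (k c' + d') + (t - (h + k))₊ c`: the constant part sums
to `(h c + d) / (1 - γ)`, the switch-on term is a geometric tail starting at `h + 1`, and the
linearly growing term is `γ ^ (h + k)` times `∑ j γ ^ j j = γ / (1 - γ) ^ 2`.
-/

open Finset

theorem hasSum_of_hasSum_nat_add {M : Type*} [AddCommGroup M] [TopologicalSpace M]
    [IsTopologicalAddGroup M] {f : ℕ → M} {a : M} (n : ℕ) (hf : ∀ t < n, f t = 0)
    (h : HasSum (fun j ↦ f (j + n)) a) : HasSum f a := by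
  rw [← hasSum_nat_add_iff' n, sum_eq_zero fun t ht ↦ hf t (mem_range.mp ht), sub_zero]
  exact h

section NormedField

variable {𝕜 : Type*} [NormedField 𝕜] {γ : 𝕜}

theorem hasSum_geometric_tail (hγ : ‖γ‖ < 1) (n : ℕ) :
    HasSum (fun t ↦ if n ≤ t then γ ^ t else 0) (γ ^ n / (1 - γ)) := by
  refine hasSum_of_hasSum_nat_add n (fun t ht ↦ if_neg (not_le.mpr ht)) ?_
  rw [div_eq_mul_inv]
  refine ((hasSum_geometric_of_norm_lt_one hγ).mul_left (γ ^ n)).congr_fun fun j ↦ ?_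
  rw [if_pos (Nat.le_add_left n j), pow_add, mul_comm]

theorem hasSum_natSub_mul_geometric (hγ : ‖γ‖ < 1) (n : ℕ) :
    HasSum (fun t ↦ ((t - n : ℕ) : 𝕜) * γ ^ t) (γ ^ (n + 1) / (1 - γ) ^ 2) := by
  refine hasSum_of_hasSum_nat_add n (fun t ht ↦ by simp [Nat.sub_eq_zero_of_le ht.le]) ?_
  rw [show γ ^ (n + 1) / (1 - γ) ^ 2 = γ ^ n * (γ / (1 - γ) ^ 2) by ring]
  refine ((hasSum_coe_mul_geometric_of_norm_lt_one hγ).mul_left (γ ^ n)).congr_fun fun j ↦ ?_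
  rw [Nat.add_sub_cancel, pow_add]
  ring

end NormedField

def branchedMajorant (h k : ℕ) (c d c' d' : ℝ) (t : ℕ) : ℝ :=
  h * c + d + (if h < t then k * c' + d' else 0) + ((t - (h + k) : ℕ) : ℝ) * c

theorem le_branchedMajorant {h k : ℕ} {c d c' d' : ℝ} (hc : 0 ≤ c) (hd : 0 ≤ d) (hc' : 0 ≤ c')
    {δ : ℕ → ℝ} (h1 : ∀ t : ℕ, t ≤ h → δ t ≤ (t : ℝ) * c + d)
    (h2 : ∀ t : ℕ, h < t → t ≤ h + k → δ t ≤ (h : ℝ) * c + ((t : ℝ) - (h : ℝ)) * c' + d')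
    (h3 : ∀ t : ℕ, h + k < t → δ t ≤ ((t : ℝ) - (k : ℝ)) * c + d + (k : ℝ) * c' + d') (t : ℕ) :
    δ t ≤ branchedMajorant h k c d c' d' t := by
  unfold branchedMajorant
  rcases le_or_gt t h with hth | hht
  · have hth' : (t : ℝ) ≤ h := by exact_mod_cast hth
    rw [if_neg hth.not_gt, Nat.sub_eq_zero_of_le (hth.trans (Nat.le_add_right h k))]
    nlinarith [h1 t hth]
  rcases le_or_gt t (h + k) with htk | hkt
  · have htk' : (t : ℝ) - h ≤ k := by
      rw [sub_le_iff_le_add']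
      exact_mod_cast htk
    rw [if_pos hht, Nat.sub_eq_zero_of_le htk]
    nlinarith [h2 t hht htk]
  · rw [if_pos hht, Nat.cast_sub hkt.le]
    push_cast
    linarith [h3 t hkt]

theorem hasSum_branchedMajorant {γ : ℝ} (hγ : ‖γ‖ < 1) (h k : ℕ) (c d c' d' : ℝ) :
    HasSum (fun t ↦ γ ^ t * branchedMajorant h k c d c' d' t)
      ((h * c + d) / (1 - γ) + γ ^ (h + 1) / (1 - γ) * (k * c' + d') +
        γ ^ (h + k + 1) / (1 - γ) ^ 2 * c) := by
  rw [div_eq_inv_mul ((h : ℝ) * c + d)]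
  refine ((((hasSum_geometric_of_norm_lt_one hγ).mul_right (h * c + d)).add
    ((hasSum_geometric_tail hγ (h + 1)).mul_right (k * c' + d'))).add
    ((hasSum_natSub_mul_geometric hγ (h + k)).mul_right c)).congr_fun fun t ↦ ?_
  simp only [branchedMajorant, Nat.lt_iff_add_one_le]
  split_ifs <;> ring

theorem branched_discounted_sum_bound_general (γ : ℝ) (hγ0 : 0 ≤ γ) (hγ1 : γ < 1)
    (h k : ℕ) (c d c' d' : ℝ)
    (hc : 0 ≤ c) (hd : 0 ≤ d) (hc' : 0 ≤ c')
    (δ : ℕ → ℝ) (hδnn : ∀ t, 0 ≤ δ t)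
    (h1 : ∀ t : ℕ, t ≤ h → δ t ≤ (t : ℝ) * c + d)
    (h2 : ∀ t : ℕ, h < t → t ≤ h + k →
      δ t ≤ (h : ℝ) * c + ((t : ℝ) - (h : ℝ)) * c' + d')
    (h3 : ∀ t : ℕ, h + k < t →
      δ t ≤ ((t : ℝ) - (k : ℝ)) * c + d + (k : ℝ) * c' + d') :
    (∑' t : ℕ, γ ^ t * δ t) ≤
      ((h : ℝ) / (1 - γ) + γ ^ (h + k + 1) / (1 - γ) ^ 2) * c + d / (1 - γ) +
        (γ ^ (h + 1) / (1 - γ)) * ((k : ℝ) * c' + d') := by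
  have hmajorant := hasSum_branchedMajorant (by rwa [Real.norm_of_nonneg hγ0]) h k c d c' d'
  have hle : ∀ t, γ ^ t * δ t ≤ γ ^ t * branchedMajorant h k c d c' d' t := fun t ↦
    mul_le_mul_of_nonneg_left (le_branchedMajorant hc hd hc' h1 h2 h3 t) (pow_nonneg hγ0 t)
  have hsummable : Summable fun t ↦ γ ^ t * δ t :=
    .of_nonneg_of_le (fun t ↦ mul_nonneg (pow_nonneg hγ0 t) (hδnn t)) hle hmajorant.summable
  calc ∑' t, γ ^ t * δ t ≤ _ := hasSum_le hle hsummable.hasSum hmajorant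
    _ = _ := by ring

/-- Discounted sum bound for piecewise-bounded branched-rollout errors (Lemma C.4). -/
theorem branched_discounted_sum_bound (γ : ℝ) (hγ0 : 0 ≤ γ) (hγ1 : γ < 1)
    (h k : ℕ) (c d c' d' : ℝ)
    (hc : 0 ≤ c) (hd : 0 ≤ d) (hc' : 0 ≤ c') (hd' : 0 ≤ d')
    (δ : ℕ → ℝ) (hδnn : ∀ t, 0 ≤ δ t)
    (h1 : ∀ t : ℕ, t ≤ h → δ t ≤ (t : ℝ) * c + d)
    (h2 : ∀ t : ℕ, h < t → t ≤ h + k →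
      δ t ≤ (h : ℝ) * c + ((t : ℝ) - (h : ℝ)) * c' + d')
    (h3 : ∀ t : ℕ, h + k < t →
      δ t ≤ ((t : ℝ) - (k : ℝ)) * c + d + (k : ℝ) * c' + d') :
    (∑' t : ℕ, γ ^ t * δ t) ≤
      ((h : ℝ) / (1 - γ) + γ ^ (h + k + 1) / (1 - γ) ^ 2) * c + d / (1 - γ) +
        (γ ^ (h + 1) / (1 - γ)) * ((k : ℝ) * c' + d') :=
  branched_discounted_sum_bound_general γ hγ0 hγ1 h k c d c' d' hc hd hc' δ hδnn h1 h2 h3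
end
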